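/- arXiv:1602.05058 — 2 statements merged into one kernel-verified Lean document; each statement's English description precedes it below -/
import Mathlib

section
/- Let z0 lie in the upper half-plane H with Re(z0) = 0. Then the value range for inverse functions V*_𝓘(z0) = {w ∈ H : f(w) = z0 for some f ∈ 𝓘} equals the half-open vertical segment {z0 − i·t : t ∈ [0, Im(z0))}. -/
/-!
Symmetry under `z ↦ -z̄` together with injectivity forces every preimage `w` of a point `z0` of
the imaginary axis to lie on that axis. The hydrodynamic normalization gives `f` angular
derivative `1` at `∞`, so Julia's lemma (a limit of the Schwarz–Pick inequality along `i y`)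
yields `Im w ≤ Im f(w)`: `w` lies on the segment below `z0`. Conversely, for `0 < s ≤ Im z0`
the slit map `z ↦ √(z² - h²)` with `h² = (Im z0)² - s²` belongs to `𝓘` and sends `i s` to `z0`.
-/

open Complex Set Filter Topology

noncomputable section

/-- The upper half-plane. -/
def UHP : Set ℂ := {z : ℂ | 0 < z.im}

/-- Hydrodynamic normalization at infinity: there is `c ≥ 0` (the half-plane capacity)
such that `z * (f z - z) → -c` as `|z| → ∞` within each sector `{Im z ≥ ε * |z|}`. -/
def HydroNorm (f : ℂ → ℂ) : Prop :=
  ∃ c : ℝ, 0 ≤ c ∧ ∀ ε : ℝ, 0 < ε →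
    Tendsto (fun z : ℂ => z * (f z - z))
      (comap (fun z : ℂ => ‖z‖) atTop ⊓ 𝓟 {z : ℂ | ε * ‖z‖ ≤ z.im})
      (𝓝 (-(c : ℂ)))

/-- The class `𝓗` of univalent self-maps of the upper half-plane with
hydrodynamic normalization. -/
def ClassH (f : ℂ → ℂ) : Prop :=
  DifferentiableOn ℂ f UHP ∧ InjOn f UHP ∧ MapsTo f UHP UHP ∧ HydroNorm f

/-- The class `𝓘` of maps in `𝓗` symmetric w.r.t. the imaginary axis. -/
def ClassI (f : ℂ → ℂ) : Prop :=
  ClassH f ∧ ∀ z ∈ UHP, f (-(starRingEnd ℂ) z) = -(starRingEnd ℂ) (f z)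

/-- The value range for inverse functions `V*_𝓘(z0)`. -/
def VIstar (z0 : ℂ) : Set ℂ :=
  {w : ℂ | w ∈ UHP ∧ ∃ f : ℂ → ℂ, ClassI f ∧ f w = z0}

open ComplexConjugate

lemma eq_of_sq_eq_of_im_pos {x y : ℂ} (hx : 0 < x.im) (hy : 0 < y.im) (h : x ^ 2 = y ^ 2) :
    x = y := by
  rcases sq_eq_sq_iff_eq_or_eq_neg.1 h with h | h
  · exact h
  · have := congrArg im h
    simp only [neg_im] at this
    linarith

lemma ne_zero_of_mem_UHP {z : ℂ} (hz : z ∈ UHP) : z ≠ 0 := fun h => by simp [UHP, h] at hz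

lemma add_mem_UHP {u v : ℂ} (hu : u ∈ UHP) (hv : v ∈ UHP) : u + v ∈ UHP := by
  simpa [UHP] using add_pos (α := ℝ) hu hv

lemma sub_conj_mem_UHP {u v : ℂ} (hu : u ∈ UHP) (hv : v ∈ UHP) : u - conj v ∈ UHP := by
  simpa [UHP] using add_pos (α := ℝ) hu hv

lemma Complex.re_sqrt_pos {x : ℂ} (hx : x ∈ slitPlane) : 0 < (sqrt x).re := by
  rw [sqrt, cpow_inv_two_re, Real.sqrt_pos]
  rcases mem_slitPlane_iff.1 hx with h | h
  · linarith [abs_re_le_norm x, le_abs_self x.re]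
  · linarith [abs_re_lt_norm.2 h, neg_abs_le x.re]

lemma Complex.sq_sqrt (x : ℂ) : sqrt x ^ 2 = x := cpow_ofNat_inv_pow x 2

lemma sq_sub_sq_mem_slitPlane (h : ℝ) {z : ℂ} (hz : 0 < z.im) :
    (h : ℂ) ^ 2 - z ^ 2 ∈ slitPlane := by
  rw [mem_slitPlane_iff]
  by_cases hre : z.re = 0
  · left
    simp only [sub_re, pow_two, mul_re, ofReal_re, ofReal_im, hre]
    nlinarith
  · right
    simp only [sub_im, pow_two, mul_im, ofReal_re, ofReal_im]
    intro h0
    have : z.re * z.im = 0 := by linarith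
    rcases mul_eq_zero.1 this with h1 | h1 <;> [exact hre h1; linarith]

/-- The conformal map of `UHP` onto `UHP` minus the vertical slit `(0, i h]`. -/
def slitMap (h : ℝ) (z : ℂ) : ℂ := I * sqrt (h ^ 2 - z ^ 2)

lemma slitMap_sq (h : ℝ) (z : ℂ) : slitMap h z ^ 2 = z ^ 2 - h ^ 2 := by
  rw [slitMap, mul_pow, sq_sqrt, I_sq]
  ring

lemma slitMap_mapsTo (h : ℝ) : MapsTo (slitMap h) UHP UHP := fun z hz => by
  simpa [UHP, slitMap] using re_sqrt_pos (sq_sub_sq_mem_slitPlane h hz)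

lemma slitMap_injOn (h : ℝ) : InjOn (slitMap h) UHP := fun z hz w hw hzw => by
  have hsq := congrArg (· ^ 2) hzw
  simp only [slitMap_sq, sub_left_inj] at hsq
  exact eq_of_sq_eq_of_im_pos hz hw hsq

lemma differentiableOn_slitMap (h : ℝ) : DifferentiableOn ℂ (slitMap h) UHP := fun z hz => by
  have hpoly : DifferentiableAt ℂ (fun z : ℂ => (h : ℂ) ^ 2 - z ^ 2) z := by fun_prop
  exact ((differentiableAt_sqrt (sq_sub_sq_mem_slitPlane h hz)).comp z hpoly).const_mul I
    |>.differentiableWithinAt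

lemma slitMap_neg_conj (h : ℝ) {z : ℂ} (hz : z ∈ UHP) :
    slitMap h (-conj z) = -conj (slitMap h z) := by
  have harg := slitPlane_arg_ne_pi (sq_sub_sq_mem_slitPlane h hz)
  have hconj : (h : ℂ) ^ 2 - (-conj z) ^ 2 = conj ((h : ℂ) ^ 2 - z ^ 2) := by simp
  rw [slitMap, slitMap, hconj, sqrt, sqrt, conj_cpow _ _ harg, map_mul, conj_I,
    map_inv₀, map_ofNat]
  ring

def sectorAtInfty (ε : ℝ) : Filter ℂ :=
  comap (fun z : ℂ => ‖z‖) atTop ⊓ 𝓟 {z : ℂ | ε * ‖z‖ ≤ z.im}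

lemma sectorAtInfty_le_cobounded (ε : ℝ) : sectorAtInfty ε ≤ Bornology.cobounded ℂ :=
  comap_norm_atTop (E := ℂ) ▸ inf_le_left

lemma eventually_mul_norm_le_im_sectorAtInfty (ε : ℝ) :
    ∀ᶠ z in sectorAtInfty ε, ε * ‖z‖ ≤ z.im :=
  mem_inf_of_right (mem_principal_self _)

lemma eventually_mem_UHP_sectorAtInfty {ε : ℝ} (hε : 0 < ε) :
    ∀ᶠ z in sectorAtInfty ε, z ∈ UHP := by
  have hnorm : ∀ᶠ z in sectorAtInfty ε, 0 < ‖z‖ :=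
    (tendsto_comap.mono_left inf_le_left).eventually (eventually_gt_atTop 0)
  filter_upwards [hnorm, eventually_mul_norm_le_im_sectorAtInfty ε] with z h0 hz
  exact lt_of_lt_of_le (mul_pos hε h0) hz

lemma tendsto_ofReal_mul_I_sectorAtInfty :
    Tendsto (fun y : ℝ => (y : ℂ) * I) atTop (sectorAtInfty 1) := by
  refine tendsto_inf.2 ⟨tendsto_comap_iff.2 ?_, tendsto_principal.2 ?_⟩
  · simpa [Function.comp_def] using tendsto_abs_atTop_atTop
  · filter_upwards [eventually_ge_atTop 0] with y hy
    simp [abs_of_nonneg hy]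

lemma HydroNorm.tendsto_div_ofReal_mul_I {f : ℂ → ℂ} (hf : HydroNorm f) :
    Tendsto (fun y : ℝ => f (y * I) / (y * I)) atTop (𝓝 1) := by
  obtain ⟨c, -, hc⟩ := hf
  have hinv : Tendsto (fun z : ℂ => z⁻¹) (sectorAtInfty 1) (𝓝 0) :=
    tendsto_inv₀_cobounded.mono_left (sectorAtInfty_le_cobounded 1)
  have hz : ∀ᶠ z in sectorAtInfty 1, f z / z = 1 + z * (f z - z) * (z⁻¹ * z⁻¹) := by
    filter_upwards [eventually_mem_UHP_sectorAtInfty one_pos] with z hz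
    have := ne_zero_of_mem_UHP hz
    field_simp
    ring
  have hlim : Tendsto (fun z => f z / z) (sectorAtInfty 1) (𝓝 1) := by
    simpa using ((hc 1 one_pos).mul (hinv.mul hinv)).const_add 1
      |>.congr' (hz.mono fun _ h => h.symm)
  exact hlim.comp tendsto_ofReal_mul_I_sectorAtInfty

lemma hydroNorm_of_sq_eq {f : ℂ → ℂ} {a : ℝ} (ha : 0 ≤ a) (hm : MapsTo f UHP UHP)
    (hsq : ∀ z ∈ UHP, f z ^ 2 = z ^ 2 - a) : HydroNorm f := by
  refine ⟨a / 2, by positivity, fun ε hε => ?_⟩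
  change Tendsto _ (sectorAtInfty ε) _
  have hinv : Tendsto (fun z : ℂ => z⁻¹) (sectorAtInfty ε) (𝓝 0) :=
    tendsto_inv₀_cobounded.mono_left (sectorAtInfty_le_cobounded ε)
  have hgood := (eventually_mem_UHP_sectorAtInfty hε).and
    (eventually_mul_norm_le_im_sectorAtInfty ε)
  -- `|f z + z| ≥ Im z ≥ ε |z|` while `(f z - z) (f z + z) = -a`
  have hbound : ∀ᶠ z in sectorAtInfty ε, ‖f z - z‖ ≤ a / ε * ‖z⁻¹‖ := by
    filter_upwards [hgood] with z ⟨hz, hsec⟩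
    have hfz : 0 < (f z).im := hm hz
    have hz0 : 0 < ‖z‖ := lt_of_lt_of_le hz (im_le_norm z)
    have hsum : ε * ‖z‖ ≤ ‖f z + z‖ := by
      linarith [im_le_norm (f z + z), add_im (f z) z]
    have hprod : ‖f z - z‖ * ‖f z + z‖ = a := by
      rw [← norm_mul, show (f z - z) * (f z + z) = f z ^ 2 - z ^ 2 by ring, hsq z hz]
      simp [abs_of_nonneg ha]
    calc ‖f z - z‖ = ‖f z - z‖ * (ε * ‖z‖) / (ε * ‖z‖) := by field_simp
      _ ≤ ‖f z - z‖ * ‖f z + z‖ / (ε * ‖z‖) := by gcongr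
      _ = a / ε * ‖z⁻¹‖ := by rw [hprod, norm_inv]; field_simp
  have hdiff : Tendsto (fun z => f z - z) (sectorAtInfty ε) (𝓝 0) :=
    squeeze_zero_norm' hbound (by simpa using (hinv.norm.const_mul (a / ε)))
  have hratio : Tendsto (fun z => f z / z + 1) (sectorAtInfty ε) (𝓝 2) := by
    have h := ((hdiff.mul hinv).const_add 2)
    rw [mul_zero, add_zero] at h
    refine h.congr' ?_
    filter_upwards [hgood] with z ⟨hz, _⟩
    have := ne_zero_of_mem_UHP hz
    field_simp
    ring
  have hident : ∀ᶠ z in sectorAtInfty ε, -(a : ℂ) / (f z / z + 1) = z * (f z - z) := by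
    filter_upwards [hgood] with z ⟨hz, _⟩
    rw [div_add_one (ne_zero_of_mem_UHP hz), div_div_eq_mul_div,
      div_eq_iff (ne_zero_of_mem_UHP (add_mem_UHP (hm hz) hz))]
    linear_combination -z * hsq z hz
  convert (tendsto_const_nhds.div hratio two_ne_zero).congr' hident using 2
  push_cast
  ring

def cayleyAt (w u : ℂ) : ℂ := (u - w) / (u - conj w)

def cayleyAtInv (w ζ : ℂ) : ℂ := (w - conj w * ζ) / (1 - ζ)

lemma cayleyAt_self (w : ℂ) : cayleyAt w w = 0 := by simp [cayleyAt]

lemma cayleyAtInv_zero (w : ℂ) : cayleyAtInv w 0 = w := by simp [cayleyAtInv]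

lemma normSq_sub_conj (u v : ℂ) : normSq (u - conj v) = normSq (u - v) + 4 * u.im * v.im := by
  simp only [normSq_apply, sub_re, sub_im, conj_re, conj_im]
  ring

lemma norm_cayleyAt_lt_one {w u : ℂ} (hw : w ∈ UHP) (hu : u ∈ UHP) : ‖cayleyAt w u‖ < 1 := by
  rw [cayleyAt, norm_div,
    div_lt_one (norm_pos_iff.2 (ne_zero_of_mem_UHP (sub_conj_mem_UHP hu hw))),
    ← sq_lt_sq₀ (norm_nonneg _) (norm_nonneg _)]
  simp only [← normSq_eq_norm_sq, normSq_sub_conj]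
  have : 0 < u.im * w.im := mul_pos hu hw
  linarith

lemma cayleyAtInv_mem_UHP {w ζ : ℂ} (hw : w ∈ UHP) (hζ : ‖ζ‖ < 1) : cayleyAtInv w ζ ∈ UHP := by
  have hne : (1 : ℂ) - ζ ≠ 0 := sub_ne_zero.2 fun h => by simp [← h] at hζ
  have hζ2 : normSq ζ < 1 := by
    rw [normSq_eq_norm_sq]
    nlinarith [norm_nonneg ζ]
  rw [normSq_apply] at hζ2
  show 0 < (cayleyAtInv w ζ).im
  rw [cayleyAtInv, div_im, div_sub_div_same]
  refine div_pos ?_ (normSq_pos.2 hne)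
  simp only [sub_re, sub_im, mul_re, mul_im, conj_re, conj_im, one_re, one_im]
  nlinarith [mul_pos (α := ℝ) hw (sub_pos.2 hζ2)]

lemma cayleyAtInv_cayleyAt {w u : ℂ} (hw : w ∈ UHP) (hu : u ∈ UHP) :
    cayleyAtInv w (cayleyAt w u) = u := by
  have h1 := ne_zero_of_mem_UHP (sub_conj_mem_UHP hu hw)
  have h2 := ne_zero_of_mem_UHP (sub_conj_mem_UHP hw hw)
  rw [cayleyAtInv, cayleyAt, div_eq_iff]
  · field_simp
    ring
  · rw [one_sub_div h1]
    exact div_ne_zero (by rwa [sub_sub_sub_cancel_left]) h1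

lemma differentiableOn_cayleyAt {w : ℂ} (hw : w ∈ UHP) : DifferentiableOn ℂ (cayleyAt w) UHP :=
  fun _ hu => (differentiableWithinAt_id.sub_const w).div (differentiableWithinAt_id.sub_const _)
    (ne_zero_of_mem_UHP (sub_conj_mem_UHP hu hw))

lemma differentiableOn_cayleyAtInv (w : ℂ) :
    DifferentiableOn ℂ (cayleyAtInv w) (Metric.ball 0 1) := fun ζ hζ =>
  ((differentiableWithinAt_const w).sub (differentiableWithinAt_id.const_mul _)).div
    ((differentiableWithinAt_const 1).sub differentiableWithinAt_id)
    (sub_ne_zero.2 fun h => by simp [← h] at hζ)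

/-- The Schwarz–Pick lemma on the upper half-plane. -/
theorem norm_cayleyAt_apply_le {f : ℂ → ℂ} (hd : DifferentiableOn ℂ f UHP)
    (hm : MapsTo f UHP UHP) {z w : ℂ} (hz : z ∈ UHP) (hw : w ∈ UHP) :
    ‖cayleyAt (f w) (f z)‖ ≤ ‖cayleyAt w z‖ := by
  have hinv : MapsTo (cayleyAtInv w) (Metric.ball 0 1) UHP := fun ζ hζ =>
    cayleyAtInv_mem_UHP hw (mem_ball_zero_iff.1 hζ)
  have hg := (differentiableOn_cayleyAt (hm hw)).comp
    (hd.comp (differentiableOn_cayleyAtInv w) hinv) (hm.comp hinv)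
  have hgmaps : MapsTo (cayleyAt (f w) ∘ f ∘ cayleyAtInv w) (Metric.ball 0 1)
      (Metric.closedBall 0 1) := fun ζ hζ =>
    mem_closedBall_zero_iff.2 (norm_cayleyAt_lt_one (hm hw) (hm (hinv hζ))).le
  have := norm_le_norm_of_mapsTo_ball hg hgmaps
    (by simp [Function.comp_def, cayleyAtInv_zero, cayleyAt_self]) (norm_cayleyAt_lt_one hw hz)
  rwa [Function.comp_apply, Function.comp_apply, cayleyAtInv_cayleyAt hw hz] at this

lemma normSq_sub_mul_im_le_of_norm_cayleyAt_le {a b z w : ℂ} (ha : a ∈ UHP) (hb : b ∈ UHP)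
    (hz : z ∈ UHP) (hw : w ∈ UHP) (h : ‖cayleyAt b a‖ ≤ ‖cayleyAt w z‖) :
    normSq (a - b) * (z.im * w.im) ≤ normSq (z - w) * (a.im * b.im) := by
  rw [← sq_le_sq₀ (norm_nonneg _) (norm_nonneg _), cayleyAt, cayleyAt, norm_div, norm_div,
    div_pow, div_pow] at h
  simp only [← normSq_eq_norm_sq, normSq_sub_conj] at h
  rw [div_le_div_iff₀ (by nlinarith [normSq_nonneg (a - b), mul_pos (α := ℝ) ha hb])
      (by nlinarith [normSq_nonneg (z - w), mul_pos (α := ℝ) hz hw])] at h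
  linarith

/-- Julia's lemma at the boundary point `∞`. -/
theorem im_le_im_apply_of_tendsto {f : ℂ → ℂ} (hd : DifferentiableOn ℂ f UHP)
    (hm : MapsTo f UHP UHP)
    (hf : Tendsto (fun y : ℝ => f (y * I) / (y * I)) atTop (𝓝 1)) {w : ℂ} (hw : w ∈ UHP) :
    w.im ≤ (f w).im := by
  set q := fun y : ℝ => f (y * I) / (y * I)
  have hinv : Tendsto (fun y : ℝ => ((y : ℂ))⁻¹) atTop (𝓝 0) := by
    simpa [Function.comp_def] using (continuous_ofReal.tendsto 0).comp tendsto_inv_atTop_zero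
  -- Schwarz–Pick at `w` and `i y`, divided by `y ^ 3`
  have hineq : ∀ᶠ y : ℝ in atTop, w.im * normSq (f w * (y : ℂ)⁻¹ - I * q y) ≤
      (f w).im * (q y).re * normSq (w * (y : ℂ)⁻¹ - I) := by
    filter_upwards [eventually_gt_atTop 0] with y hy
    have hyI : (y : ℂ) * I ∈ UHP := by simpa [UHP] using hy
    have hSP := normSq_sub_mul_im_le_of_norm_cayleyAt_le (hm hw) (hm hyI) hw hyI
      (norm_cayleyAt_apply_le hd hm hw hyI)
    have hy0 : (y : ℂ) ≠ 0 := ofReal_ne_zero.2 hy.ne'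
    have hfy : f (y * I) = y * (I * q y) := by
      simp only [q]
      field_simp
    have e1 : f w - f (y * I) = y * (f w * (y : ℂ)⁻¹ - I * q y) := by
      rw [hfy]; field_simp
    have e2 : w - y * I = y * (w * (y : ℂ)⁻¹ - I) := by field_simp
    rw [e1, e2, hfy, normSq_mul, normSq_mul, normSq_ofReal] at hSP
    simp only [mul_im, ofReal_re, ofReal_im, I_re, I_im, mul_re, zero_mul, mul_zero, one_mul,
      mul_one, add_zero] at hSP
    exact le_of_mul_le_mul_left (by linear_combination hSP) (pow_pos hy 3)
  have hL : Tendsto (fun y : ℝ => w.im * normSq (f w * (y : ℂ)⁻¹ - I * q y)) atTop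
      (𝓝 (w.im * normSq (f w * 0 - I * 1))) :=
    ((continuous_normSq.tendsto _).comp ((hinv.const_mul _).sub (hf.const_mul I))).const_mul _
  have hR : Tendsto (fun y : ℝ => (f w).im * (q y).re * normSq (w * (y : ℂ)⁻¹ - I)) atTop
      (𝓝 ((f w).im * (1 : ℂ).re * normSq (w * 0 - I))) :=
    (((continuous_re.tendsto _).comp hf).const_mul _).mul
      ((continuous_normSq.tendsto _).comp ((hinv.const_mul _).sub_const I))
  simpa using le_of_tendsto_of_tendsto hL hR hineq

lemma neg_conj_eq_self_iff {z : ℂ} : -conj z = z ↔ z.re = 0 := by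
  constructor
  · intro h
    have := congrArg re h
    simp only [neg_re, conj_re] at this
    linarith
  · intro h
    apply Complex.ext <;> simp [h]

lemma ClassI.re_eq_zero_of_re_apply_eq_zero {f : ℂ → ℂ} (hf : ClassI f) {w : ℂ} (hw : w ∈ UHP)
    (hfw : (f w).re = 0) : w.re = 0 := by
  obtain ⟨⟨-, hinj, -, -⟩, hsym⟩ := hf
  have hw' : -conj w ∈ UHP := by simpa [UHP] using hw
  refine neg_conj_eq_self_iff.1 (hinj hw' hw ?_)
  rw [hsym w hw, neg_conj_eq_self_iff.2 hfw]

lemma classI_slitMap (h : ℝ) : ClassI (slitMap h) :=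
  ⟨⟨differentiableOn_slitMap h, slitMap_injOn h, slitMap_mapsTo h,
    hydroNorm_of_sq_eq (sq_nonneg h) (slitMap_mapsTo h) fun z _ => by
      rw [slitMap_sq]
      push_cast
      ring⟩,
   fun _ hz => slitMap_neg_conj h hz⟩

lemma slitMap_ofReal_mul_I (h : ℝ) {s : ℝ} (hs : 0 < s) :
    slitMap h (s * I) = (√(s ^ 2 + h ^ 2) : ℝ) * I := by
  refine eq_of_sq_eq_of_im_pos (slitMap_mapsTo h (by simpa [UHP] using hs))
    (by simpa using Real.sqrt_pos.2 (by positivity)) ?_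
  rw [slitMap_sq, mul_pow, mul_pow, ← ofReal_pow √_, Real.sq_sqrt (by positivity), I_sq]
  push_cast
  ring

theorem valueRange_inv_ClassI_imaginary_axis_general (z0 : ℂ) (hre : z0.re = 0) :
    VIstar z0 = {w : ℂ | ∃ t : ℝ, 0 ≤ t ∧ t < z0.im ∧ w = z0 - Complex.I * (t : ℂ)} := by
  ext w
  constructor
  · rintro ⟨hw, f, hf, rfl⟩
    have hw_re : w.re = 0 := hf.re_eq_zero_of_re_apply_eq_zero hw hre
    obtain ⟨⟨hd, -, hm, hhydro⟩, -⟩ := hf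
    have him : w.im ≤ (f w).im :=
      im_le_im_apply_of_tendsto hd hm hhydro.tendsto_div_ofReal_mul_I hw
    have hw_im : 0 < w.im := hw
    refine ⟨(f w).im - w.im, by linarith, by linarith, ?_⟩
    apply Complex.ext <;> simp [hw_re, hre]
  · rintro ⟨t, ht0, htb, rfl⟩
    have hs : 0 < z0.im - t := by linarith
    have hw : z0 - I * t = ((z0.im - t : ℝ) : ℂ) * I := by
      apply Complex.ext <;> simp [hre]
    refine ⟨by simpa [UHP] using hs, slitMap √(z0.im ^ 2 - (z0.im - t) ^ 2),
      classI_slitMap _, ?_⟩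
    rw [hw, slitMap_ofReal_mul_I _ hs, Real.sq_sqrt (by nlinarith), add_sub_cancel,
      Real.sqrt_sq (by linarith)]
    apply Complex.ext <;> simp [hre]

theorem valueRange_inv_ClassI_imaginary_axis (z0 : ℂ) (hz0 : z0 ∈ UHP) (hre : z0.re = 0) :
    VIstar z0 = {w : ℂ | ∃ t : ℝ, 0 ≤ t ∧ t < z0.im ∧ w = z0 - Complex.I * (t : ℂ)} :=
  valueRange_inv_ClassI_imaginary_axis_general z0 hre
end
end

section
/- For every t ∈ [0,∞): the map f_{1,t}(z) = (1/(2z))·(e^t(z+1)² − 2z − e^{t/2}(z+1)·√(e^t(z+1)² − 4z)) (extended holomorphically by f_{1,t}(0) = 0) belongs to 𝒰 and maps D injectively onto D \ [2e^t − 1 − 2e^{t/2}·√(e^t − 1), 1); likewise f_{2,t}(z) = (1/(2z))·(e^t(z−1)² + 2z + e^{t/2}(z−1)·√(e^t(z−1)² + 4z)) (extended by f_{2,t}(0) = 0) belongs to 𝒰 and maps D injectively onto D \ (−1, −2e^t + 1 + 2e^{t/2}·√(e^t − 1)]. -/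
open Complex Set Filter Topology

noncomputable section

/-- The open unit disc. -/
def uDisc : Set ℂ := {z : ℂ | ‖z‖ < 1}

/-- The holomorphic branch of the square root with `√1 = 1` (principal branch). -/
def csqrt (z : ℂ) : ℂ := z ^ (1/2 : ℂ)

/-- `f` has only real Taylor coefficients at `0`, expressed by the symmetry
`f(conj z) = conj (f z)` on the unit disc. -/
def RealCoeffs (f : ℂ → ℂ) : Prop :=
  ∀ z ∈ uDisc, f ((starRingEnd ℂ) z) = (starRingEnd ℂ) (f z)

/-- The class `𝒰` of univalent self-maps of the unit disc with `f(0) = 0`,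
`f'(0) > 0` and real Taylor coefficients. -/
def ClassU (f : ℂ → ℂ) : Prop :=
  DifferentiableOn ℂ f uDisc ∧ InjOn f uDisc ∧ MapsTo f uDisc uDisc ∧
    f 0 = 0 ∧ 0 < (deriv f 0).re ∧ (deriv f 0).im = 0 ∧ RealCoeffs f

/-- The value range `V_𝒰(z0)`. -/
def VU (z0 : ℂ) : Set ℂ := {w : ℂ | ∃ f : ℂ → ℂ, ClassU f ∧ f z0 = w}

/-- The slit mapping `f_{1,t}`, extended holomorphically by `f_{1,t}(0) = 0`. -/
def slitMap1 (t : ℝ) (z : ℂ) : ℂ :=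
  if z = 0 then 0 else
  (1/(2*z)) * (Real.exp t * (z+1)^2 - 2*z -
    Real.exp (t/2) * (z+1) * csqrt (Real.exp t * (z+1)^2 - 4*z))

/-- The slit mapping `f_{2,t}`, extended holomorphically by `f_{2,t}(0) = 0`. -/
def slitMap2 (t : ℝ) (z : ℂ) : ℂ :=
  if z = 0 then 0 else
  (1/(2*z)) * (Real.exp t * (z-1)^2 + 2*z +
    Real.exp (t/2) * (z-1) * csqrt (Real.exp t * (z-1)^2 + 4*z))

/-!
The map `K(z) = z / (1 + z)²` sends the unit disc `D` bijectively onto `ℂ \ [1/4, ∞)`: it is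
injective on `D` since `K z = K w ↔ (z - w)(1 - z w) = 0`, and on the unit circle
`1 / K(v) = v̄ + 2 + v ≥ 1/4`. Rationalizing, `f = f_{1,t}` equals `2z / d` with
`(d + 2z)² = 2eᵗ(1 + z)² d`, which says `eᵗ K(f z) = K z`. Then `|f| = 1` is impossible on `D`, so
`f(D) ⊆ D` by connectedness, and `f = K⁻¹ ∘ (e⁻ᵗ K)` there. This gives injectivity, real
coefficients and `f(D) = K⁻¹(ℂ \ [e⁻ᵗ/4, ∞)) = D \ [a, 1)`, with `a` the root in `(0, 1]` of
`(1 + x)² = 4eᵗx`. Finally `f_{2,t}(z) = -f_{1,t}(-z)`.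
-/

lemma uDisc_eq_ball : uDisc = Metric.ball 0 1 := (ball_zero_eq 1).symm

lemma isOpen_uDisc : IsOpen uDisc := isOpen_lt continuous_norm continuous_const

lemma zero_mem_uDisc : (0 : ℂ) ∈ uDisc := by simp [uDisc]

lemma neg_uDisc : -uDisc = uDisc := by
  ext z
  simp [uDisc]

lemma neg_mem_uDisc {z : ℂ} (hz : z ∈ uDisc) : -z ∈ uDisc := by
  simpa [uDisc] using hz

lemma conj_mem_uDisc {z : ℂ} (hz : z ∈ uDisc) : (starRingEnd ℂ) z ∈ uDisc := by
  simpa [uDisc] using hz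

lemma ofReal_mem_uDisc {x : ℝ} : (x : ℂ) ∈ uDisc ↔ -1 < x ∧ x < 1 := by
  simp [uDisc, abs_lt]

lemma one_add_ne_zero_of_mem_uDisc {z : ℂ} (hz : z ∈ uDisc) : 1 + z ≠ 0 := by
  intro h
  rw [show z = -1 by linear_combination h] at hz
  simp [uDisc] at hz

/-- The smaller root `(√s - √(s - 1))²` of `(1 + x)² = 4 s x`. -/
def slitEnd (s : ℝ) : ℝ := 2 * s - 1 - 2 * √s * √(s - 1)

lemma slitEnd_one : slitEnd 1 = 1 := by norm_num [slitEnd]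

lemma slitEnd_le_iff {s x : ℝ} (hs : 1 ≤ s) (hx : x < 1) :
    slitEnd s ≤ x ↔ (1 + x) ^ 2 ≤ 4 * s * x := by
  set b := 2 * s - 1 + 2 * √s * √(s - 1)
  have hb : 1 ≤ b := by
    have : 0 ≤ √s * √(s - 1) := by positivity
    linarith
  have hfactor : (1 + x) ^ 2 - 4 * s * x = (x - slitEnd s) * (x - b) := by
    have h₁ := Real.sq_sqrt (show 0 ≤ s by linarith)
    have h₂ := Real.sq_sqrt (show 0 ≤ s - 1 by linarith)
    simp only [slitEnd, b]
    linear_combination 4 * √(s - 1) ^ 2 * h₁ + 4 * s * h₂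
  constructor
  · intro h
    nlinarith [mul_nonpos_of_nonneg_of_nonpos (sub_nonneg.2 h) (show x - b ≤ 0 by linarith)]
  · intro h
    by_contra! hlt
    nlinarith [mul_pos_of_neg_of_neg (sub_neg.2 hlt) (show x - b < 0 by linarith)]

lemma slitEnd_le_iff_quarter_le {s x : ℝ} (hs : 1 ≤ s) (hx₁ : -1 < x) (hx₂ : x < 1) :
    slitEnd s ≤ x ↔ 1 / 4 ≤ s * x / (1 + x) ^ 2 := by
  rw [slitEnd_le_iff hs hx₂, le_div_iff₀ (by nlinarith)]
  constructor <;> intro h <;> linarith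

/-- `z / (1 + z)²`, which is `-k(-z)` for the Koebe function `k`. -/
def koebe (z : ℂ) : ℂ := z / (1 + z) ^ 2

lemma koebe_inv (z : ℂ) : koebe z⁻¹ = koebe z := by
  rcases eq_or_ne z 0 with rfl | hz
  · simp [koebe]
  rw [koebe, koebe, show 1 + z⁻¹ = (1 + z) / z by field_simp; ring, div_pow, div_div_eq_mul_div]
  field_simp

lemma conj_koebe (z : ℂ) : (starRingEnd ℂ) (koebe z) = koebe ((starRingEnd ℂ) z) := by
  simp [koebe, map_div₀]

lemma koebe_eq_of_mul_eq {z c : ℂ} (hz : 1 + z ≠ 0) (h : c * (1 + z) ^ 2 = z) : koebe z = c := by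
  rw [koebe, div_eq_iff (pow_ne_zero 2 hz), h]

lemma smul_koebe_eq_of_mul_eq {s z w : ℂ} (hs : s ≠ 0) (hz : 1 + z ≠ 0)
    (h : s * w * (1 + z) ^ 2 = z * (1 + w) ^ 2) : s * koebe w = koebe z := by
  have hw : 1 + w ≠ 0 := by
    intro hw
    exact mul_ne_zero hs (pow_ne_zero 2 hz)
      (by linear_combination -h + (s * (1 + z) ^ 2 - z * (1 + w)) * hw)
  simp only [koebe]
  field_simp
  linear_combination h

lemma injOn_koebe : InjOn koebe uDisc := by
  intro z hz w hw h
  rw [koebe, koebe, div_eq_div_iff (pow_ne_zero 2 (one_add_ne_zero_of_mem_uDisc hz))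
    (pow_ne_zero 2 (one_add_ne_zero_of_mem_uDisc hw))] at h
  have hzw : z * w ≠ 1 := by
    intro h1
    have : ‖z * w‖ < 1 := by
      rw [norm_mul]
      exact mul_lt_one_of_nonneg_of_lt_one_left (norm_nonneg _) hz hw.le
    simp [h1] at this
  have : (z - w) * (1 - z * w) = 0 := by linear_combination h
  rcases mul_eq_zero.1 this with h | h
  · linear_combination h
  · exact absurd (by linear_combination -h) hzw

lemma koebe_mem_Ici_of_norm_eq_one {v : ℂ} (hv : ‖v‖ = 1) (hv₁ : v ≠ -1) :
    koebe v ∈ ofReal '' Ici (1 / 4) := by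
  have hv₀ : v ≠ 0 := by rintro rfl; simp at hv
  have hconj : v * (starRingEnd ℂ) v = 1 := by
    rw [Complex.mul_conj, Complex.normSq_eq_norm_sq, hv]; norm_num
  -- `(1 + v)² / v = v̄ + 2 + v` since `v v̄ = 1`
  have hsq : (1 + v) ^ 2 = ((2 + 2 * v.re : ℝ) : ℂ) * v := by
    have hre := Complex.add_conj v
    push_cast at hre ⊢
    linear_combination -hconj + v * hre
  have hpos : 0 < 2 + 2 * v.re := by
    have hne : 2 + 2 * v.re ≠ 0 := by
      intro h
      rw [h, Complex.ofReal_zero, zero_mul, sq_eq_zero_iff] at hsq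
      exact hv₁ (by linear_combination hsq)
    have := neg_le_of_abs_le ((Complex.abs_re_le_norm v).trans hv.le)
    exact lt_of_le_of_ne (by linarith) (Ne.symm hne)
  have hle : 2 + 2 * v.re ≤ 4 := by linarith [(Complex.re_le_norm v).trans hv.le]
  refine ⟨(2 + 2 * v.re)⁻¹, by simpa using inv_anti₀ hpos hle, ?_⟩
  rw [koebe, hsq, Complex.ofReal_inv]
  field_simp

lemma ofReal_re_eq_of_koebe_im_eq_zero {z : ℂ} (hz : z ∈ uDisc) (h : (koebe z).im = 0) :
    (z.re : ℂ) = z := by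
  rw [← Complex.conj_eq_iff_re]
  exact injOn_koebe (conj_mem_uDisc hz) hz (by rw [← conj_koebe, Complex.conj_eq_iff_im.2 h])

lemma smul_koebe_mem_Ici_iff {s : ℝ} (hs : 1 ≤ s) {z : ℂ} (hz : z ∈ uDisc) :
    (s : ℂ) * koebe z ∈ ofReal '' Ici (1 / 4) ↔ z ∈ ofReal '' Ico (slitEnd s) 1 := by
  have hreal (x : ℝ) : (s : ℂ) * koebe x = ((s * x / (1 + x) ^ 2 : ℝ) : ℂ) := by
    simp only [koebe]; push_cast; ring
  constructor
  · rintro ⟨y, hy, hyz⟩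
    have him : (koebe z).im = 0 := by
      have := congrArg Complex.im hyz
      rw [Complex.ofReal_im, Complex.im_ofReal_mul] at this
      exact (mul_eq_zero.1 this.symm).resolve_left (by linarith)
    have hzx := ofReal_re_eq_of_koebe_im_eq_zero hz him
    rw [← hzx] at hz hyz ⊢
    obtain ⟨hx₁, hx₂⟩ := ofReal_mem_uDisc.1 hz
    rw [hreal, Complex.ofReal_inj] at hyz
    exact ⟨z.re, ⟨(slitEnd_le_iff_quarter_le hs hx₁ hx₂).2 (hyz ▸ hy), hx₂⟩, rfl⟩
  · rintro ⟨x, ⟨hax, hx₂⟩, rfl⟩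
    obtain ⟨hx₁, -⟩ := ofReal_mem_uDisc.1 hz
    exact ⟨_, (slitEnd_le_iff_quarter_le hs hx₁ hx₂).1 hax, (hreal x).symm⟩

lemma koebe_notMem_Ici {z : ℂ} (hz : z ∈ uDisc) : koebe z ∉ ofReal '' Ici (1 / 4) := by
  simpa [slitEnd_one] using (smul_koebe_mem_Ici_iff le_rfl hz).not

lemma image_koebe : koebe '' uDisc = (ofReal '' Ici (1 / 4))ᶜ := by
  refine Subset.antisymm (image_subset_iff.2 fun z hz => koebe_notMem_Ici hz) fun c hc => ?_
  rcases eq_or_ne c 0 with rfl | hc₀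
  · exact ⟨0, zero_mem_uDisc, by simp [koebe]⟩
  obtain ⟨r, hr⟩ := exists_quadratic_eq_zero hc₀
    (IsAlgClosed.exists_eq_mul_self (discrim c (2 * c - 1) c))
  have hr₁ : r ≠ -1 := by rintro rfl; exact one_ne_zero (by linear_combination hr)
  have hkr : koebe r = c :=
    koebe_eq_of_mul_eq (fun h => hr₁ (by linear_combination h)) (by linear_combination hr)
  rcases lt_trichotomy ‖r‖ 1 with h | h | h
  · exact ⟨r, h, hkr⟩
  · exact absurd (hkr ▸ koebe_mem_Ici_of_norm_eq_one h hr₁) hc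
  · exact ⟨r⁻¹, by simpa [uDisc, norm_inv] using inv_lt_one_of_one_lt₀ h, by rw [koebe_inv, hkr]⟩

section SmulKoebe

variable {g : ℂ → ℂ} {s : ℝ}

lemma injOn_of_smul_koebe (hg : ∀ z ∈ uDisc, (s : ℂ) * koebe (g z) = koebe z) :
    InjOn g uDisc :=
  fun z hz w hw h => injOn_koebe hz hw (by rw [← hg z hz, ← hg w hw, h])

lemma mapsTo_of_smul_koebe (hs : 1 ≤ s) (hcont : ContinuousOn g uDisc) (h₀ : g 0 = 0)
    (hg : ∀ z ∈ uDisc, (s : ℂ) * koebe (g z) = koebe z) : MapsTo g uDisc uDisc := by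
  have hsphere : ∀ z ∈ uDisc, ‖g z‖ ≠ 1 := by
    intro z hz hgz
    by_cases h₁ : g z = -1
    · -- `koebe (-1) = 0` by the convention `x / 0 = 0`, so `z = 0`
      have hkz : koebe z = 0 := by rw [← hg z hz, h₁]; simp [koebe]
      rw [koebe, div_eq_zero_iff, or_iff_left (pow_ne_zero 2 (one_add_ne_zero_of_mem_uDisc hz))]
        at hkz
      simp [hkz, h₀] at h₁
    · obtain ⟨y, hy, hyg⟩ := koebe_mem_Ici_of_norm_eq_one hgz h₁
      refine koebe_notMem_Ici hz ⟨s * y, mem_Ici.2 ?_, ?_⟩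
      · nlinarith [mem_Ici.1 hy]
      · rw [← hg z hz, ← hyg, Complex.ofReal_mul]
  have hpre : IsPreconnected (g '' uDisc) :=
    (uDisc_eq_ball ▸ (convex_ball (0 : ℂ) 1).isPreconnected).image g hcont
  have hdisj : Disjoint uDisc {w : ℂ | 1 < ‖w‖} :=
    disjoint_left.2 fun w (h₁ : ‖w‖ < 1) h₂ => lt_asymm h₁ h₂
  refine image_subset_iff.1 (hpre.subset_left_of_subset_union isOpen_uDisc
    (isOpen_lt continuous_const continuous_norm) hdisj ?_
    ⟨0, ⟨0, zero_mem_uDisc, h₀⟩, zero_mem_uDisc⟩)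
  rintro _ ⟨z, hz, rfl⟩
  exact (lt_or_gt_of_ne (hsphere z hz)).imp id id

lemma realCoeffs_of_smul_koebe (hs : s ≠ 0) (hmaps : MapsTo g uDisc uDisc)
    (hg : ∀ z ∈ uDisc, (s : ℂ) * koebe (g z) = koebe z) : RealCoeffs g := by
  intro z hz
  apply injOn_koebe (hmaps (conj_mem_uDisc hz)) (conj_mem_uDisc (hmaps hz))
  apply mul_left_cancel₀ (Complex.ofReal_ne_zero.2 hs)
  rw [hg _ (conj_mem_uDisc hz), ← conj_koebe, ← conj_koebe, ← hg z hz, map_mul,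
    Complex.conj_ofReal]

lemma image_of_smul_koebe (hs : 1 ≤ s) (hmaps : MapsTo g uDisc uDisc)
    (hg : ∀ z ∈ uDisc, (s : ℂ) * koebe (g z) = koebe z) :
    g '' uDisc = uDisc \ ofReal '' Ico (slitEnd s) 1 := by
  ext w
  constructor
  · rintro ⟨z, hz, rfl⟩
    refine ⟨hmaps hz, fun h => koebe_notMem_Ici hz ?_⟩
    rw [← hg z hz]
    exact (smul_koebe_mem_Ici_iff hs (hmaps hz)).2 h
  · rintro ⟨hw, hslit⟩
    have : (s : ℂ) * koebe w ∈ koebe '' uDisc := by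
      rw [image_koebe]
      exact mt (smul_koebe_mem_Ici_iff hs hw).1 hslit
    obtain ⟨z, hz, hkz⟩ := this
    refine ⟨z, hz, injOn_koebe (hmaps hz) hw
      (mul_left_cancel₀ (Complex.ofReal_ne_zero.2 (by positivity)) ?_)⟩
    rw [hg z hz, hkz]

lemma classU_of_smul_koebe (hs : 1 ≤ s) (hdiff : DifferentiableOn ℂ g uDisc) (h₀ : g 0 = 0)
    (hderiv : deriv g 0 = ((s⁻¹ : ℝ) : ℂ))
    (hg : ∀ z ∈ uDisc, (s : ℂ) * koebe (g z) = koebe z) : ClassU g := by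
  have hmaps := mapsTo_of_smul_koebe hs hdiff.continuousOn h₀ hg
  refine ⟨hdiff, injOn_of_smul_koebe hg, hmaps, h₀, ?_, ?_,
    realCoeffs_of_smul_koebe (by positivity) hmaps hg⟩
  · rw [hderiv, Complex.ofReal_re]
    positivity
  · rw [hderiv, Complex.ofReal_im]

end SmulKoebe

lemma ClassU.neg_comp_neg {f : ℂ → ℂ} (hf : ClassU f) : ClassU (fun z => -f (-z)) := by
  obtain ⟨hdiff, hinj, hmaps, h₀, hre, him, hreal⟩ := hf
  have hneg : MapsTo Neg.neg uDisc uDisc := fun z hz => neg_mem_uDisc hz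
  have hderiv : deriv (fun z => -f (-z)) 0 = deriv f 0 := by
    rw [deriv.fun_neg, deriv_comp_neg, neg_zero, neg_neg]
  refine ⟨(hdiff.comp (differentiableOn_neg _) hneg).neg, fun z hz w hw h => ?_,
    fun z hz => hneg (hmaps (hneg hz)), by simp [h₀], hderiv ▸ hre, hderiv ▸ him, fun z hz => ?_⟩
  · exact neg_injective (hinj (hneg hz) (hneg hw) (neg_injective h))
  · show -f (-(starRingEnd ℂ) z) = (starRingEnd ℂ) (-f (-z))
    rw [← map_neg, hreal _ (hneg hz), map_neg]

lemma image_neg_comp_neg (f : ℂ → ℂ) : (fun z => -f (-z)) '' uDisc = -(f '' uDisc) := by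
  rw [show (fun z => -f (-z)) = (-·) ∘ f ∘ (-·) from rfl, image_comp, image_comp,
    image_neg_eq_neg (s := uDisc), neg_uDisc, image_neg_eq_neg]

lemma neg_uDisc_diff_Ico (a : ℝ) :
    -(uDisc \ ofReal '' Ico a 1) = uDisc \ ofReal '' Ioc (-1) (-a) := by
  rw [← image_neg_eq_neg, image_sdiff neg_injective, image_neg_eq_neg, neg_uDisc, image_image,
    ← image_neg_Ico, image_image]
  simp

lemma csqrt_sq (w : ℂ) : csqrt w ^ 2 = w := by
  rcases eq_or_ne w 0 with rfl | hw
  · simp [csqrt]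
  · rw [csqrt, sq, ← Complex.cpow_add _ _ hw]
    norm_num

lemma csqrt_exp (t : ℝ) : csqrt (Real.exp t) = Real.exp (t / 2) := by
  rw [csqrt, show (1 / 2 : ℂ) = ((1 / 2 : ℝ) : ℂ) by norm_num,
    ← Complex.ofReal_cpow (Real.exp_pos t).le, ← Real.exp_mul, mul_one_div]

lemma exp_half_sq (t : ℝ) : ((Real.exp (t / 2) : ℝ) : ℂ) ^ 2 = Real.exp t := by
  rw [← Complex.ofReal_pow, sq, ← Real.exp_add, add_halves]

lemma slitArg_mem_slitPlane {t : ℝ} (ht : 0 ≤ t) {z : ℂ} (hz : z ∈ uDisc) :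
    (Real.exp t : ℂ) * (z + 1) ^ 2 - 4 * z ∈ slitPlane := by
  have hz' : z.re ^ 2 + z.im ^ 2 < 1 := by
    have : ‖z‖ ^ 2 < 1 := by nlinarith [norm_nonneg z, show ‖z‖ < 1 from hz]
    rwa [Complex.sq_norm, Complex.normSq_apply, ← sq, ← sq] at this
  have hE : 1 ≤ Real.exp t := Real.one_le_exp ht
  rw [Complex.mem_slitPlane_iff]
  have hre : ((Real.exp t : ℂ) * (z + 1) ^ 2 - 4 * z).re =
      Real.exp t * ((z.re + 1) ^ 2 - z.im ^ 2) - 4 * z.re := by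
    simp only [sq, Complex.sub_re, Complex.mul_re, Complex.ofReal_re, Complex.ofReal_im,
      Complex.add_re, Complex.add_im, Complex.one_re, Complex.one_im, Complex.mul_im]
    norm_num
  have him : ((Real.exp t : ℂ) * (z + 1) ^ 2 - 4 * z).im =
      2 * z.im * (Real.exp t * (z.re + 1) - 2) := by
    simp only [sq, Complex.sub_im, Complex.mul_re, Complex.ofReal_re, Complex.ofReal_im,
      Complex.add_re, Complex.add_im, Complex.one_re, Complex.one_im, Complex.mul_im]
    norm_num
    ring
  rw [hre, him]
  by_cases hy : z.im = 0
  · left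
    rw [hy] at hz' ⊢
    have hx : 0 < 1 - z.re := by nlinarith
    nlinarith [mul_le_mul_of_nonneg_right hE (sq_nonneg (z.re + 1)), mul_pos hx hx]
  by_cases hc : Real.exp t * (z.re + 1) = 2
  · left
    nlinarith
  · right
    exact mul_ne_zero (mul_ne_zero two_ne_zero hy) (sub_ne_zero.2 hc)

/-- Rationalizing the numerator turns `slitMap1 t` into `2 z / slitDen t z`, which is
holomorphic across `z = 0`. -/
def slitDen (t : ℝ) (z : ℂ) : ℂ :=
  Real.exp t * (z + 1) ^ 2 - 2 * z +
    Real.exp (t / 2) * (z + 1) * csqrt (Real.exp t * (z + 1) ^ 2 - 4 * z)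

lemma slitRoot_sq (t : ℝ) (z : ℂ) :
    ((Real.exp (t / 2) : ℂ) * (z + 1) * csqrt (Real.exp t * (z + 1) ^ 2 - 4 * z)) ^ 2 =
      ((Real.exp t : ℂ) * (z + 1) ^ 2 - 2 * z) ^ 2 - 4 * z ^ 2 := by
  rw [mul_pow, mul_pow, csqrt_sq, exp_half_sq]
  ring

lemma slitDen_zero (t : ℝ) : slitDen t 0 = 2 * Real.exp t := by
  rw [slitDen]
  simp only [zero_add, one_pow, mul_one, mul_zero, sub_zero]
  rw [csqrt_exp, ← exp_half_sq t]
  ring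

lemma slitDen_ne_zero (t : ℝ) (z : ℂ) : slitDen t z ≠ 0 := by
  intro h
  have hz : z = 0 := by
    have := slitRoot_sq t z
    rw [show (Real.exp (t / 2) : ℂ) * (z + 1) * csqrt (Real.exp t * (z + 1) ^ 2 - 4 * z) =
      -((Real.exp t : ℂ) * (z + 1) ^ 2 - 2 * z) by rw [slitDen] at h; linear_combination h] at this
    exact pow_eq_zero_iff two_ne_zero |>.1 (by linear_combination this / 4)
  rw [hz, slitDen_zero] at h
  exact mul_ne_zero two_ne_zero (Complex.ofReal_ne_zero.2 (Real.exp_ne_zero t)) h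

lemma slitMap1_eq_div (t : ℝ) : slitMap1 t = fun z => 2 * z / slitDen t z := by
  funext z
  rcases eq_or_ne z 0 with rfl | hz
  · simp [slitMap1]
  rw [slitMap1, if_neg hz, eq_div_iff (slitDen_ne_zero t z), slitDen]
  have hroot := slitRoot_sq t z
  generalize csqrt (Real.exp t * (z + 1) ^ 2 - 4 * z) = r at hroot ⊢
  field_simp
  linear_combination -hroot

lemma mul_slitMap1 (t : ℝ) (z : ℂ) :
    Real.exp t * slitMap1 t z * (1 + z) ^ 2 = z * (1 + slitMap1 t z) ^ 2 := by
  have hkey : (slitDen t z + 2 * z) ^ 2 = 2 * Real.exp t * (1 + z) ^ 2 * slitDen t z := by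
    simp only [slitDen]
    linear_combination slitRoot_sq t z
  have hden := slitDen_ne_zero t z
  rw [slitMap1_eq_div]
  field_simp
  linear_combination -z * hkey

lemma differentiableAt_slitDen {t : ℝ} (ht : 0 ≤ t) {z : ℂ} (hz : z ∈ uDisc) :
    DifferentiableAt ℂ (slitDen t) z := by
  have hsqrt : DifferentiableAt ℂ (fun w => csqrt (Real.exp t * (w + 1) ^ 2 - 4 * w)) z :=
    (DifferentiableAt.cpow (by fun_prop) (differentiableAt_const _)
      (slitArg_mem_slitPlane ht hz))
  unfold slitDen
  fun_prop

lemma differentiableOn_slitMap1 {t : ℝ} (ht : 0 ≤ t) :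
    DifferentiableOn ℂ (slitMap1 t) uDisc := by
  rw [slitMap1_eq_div]
  exact fun z hz => ((differentiableAt_id.const_mul 2).div (differentiableAt_slitDen ht hz)
    (slitDen_ne_zero t z)).differentiableWithinAt

lemma deriv_slitMap1_zero {t : ℝ} (ht : 0 ≤ t) :
    deriv (slitMap1 t) 0 = (((Real.exp t)⁻¹ : ℝ) : ℂ) := by
  have h := ((hasDerivAt_id' (0 : ℂ)).const_mul 2).fun_div
    (differentiableAt_slitDen ht zero_mem_uDisc).hasDerivAt (slitDen_ne_zero t 0)
  have hE := Complex.ofReal_ne_zero.2 (Real.exp_ne_zero t)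
  rw [slitMap1_eq_div, h.deriv, slitDen_zero, Complex.ofReal_inv]
  field_simp
  ring

lemma smul_koebe_slitMap1 (t : ℝ) {z : ℂ} (hz : z ∈ uDisc) :
    (Real.exp t : ℂ) * koebe (slitMap1 t z) = koebe z :=
  smul_koebe_eq_of_mul_eq (Complex.ofReal_ne_zero.2 (Real.exp_ne_zero t))
    (one_add_ne_zero_of_mem_uDisc hz) (mul_slitMap1 t z)

lemma classU_slitMap1 {t : ℝ} (ht : 0 ≤ t) : ClassU (slitMap1 t) :=
  classU_of_smul_koebe (Real.one_le_exp ht) (differentiableOn_slitMap1 ht) (by simp [slitMap1])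
    (deriv_slitMap1_zero ht) fun _ hz => smul_koebe_slitMap1 t hz

lemma image_slitMap1 {t : ℝ} (ht : 0 ≤ t) :
    slitMap1 t '' uDisc = uDisc \ ofReal '' Ico (slitEnd (Real.exp t)) 1 :=
  image_of_smul_koebe (Real.one_le_exp ht) (classU_slitMap1 ht).2.2.1
    fun _ hz => smul_koebe_slitMap1 t hz

lemma slitMap2_eq_neg_comp_neg (t : ℝ) : slitMap2 t = fun z => -slitMap1 t (-z) := by
  funext z
  rcases eq_or_ne z 0 with rfl | hz
  · simp [slitMap1, slitMap2]
  rw [slitMap1, slitMap2, if_neg hz, if_neg (neg_ne_zero.2 hz),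
    show (Real.exp t : ℂ) * (-z + 1) ^ 2 - 4 * -z = Real.exp t * (z - 1) ^ 2 + 4 * z by ring]
  field_simp
  ring

theorem slitMaps_mem_ClassU (t : ℝ) (ht : 0 ≤ t) :
    (ClassU (slitMap1 t) ∧
      slitMap1 t '' uDisc = uDisc \ (Complex.ofReal ''
        Ico (2*Real.exp t - 1 - 2*Real.exp (t/2) * Real.sqrt (Real.exp t - 1)) 1)) ∧
    (ClassU (slitMap2 t) ∧
      slitMap2 t '' uDisc = uDisc \ (Complex.ofReal ''
        Ioc (-1) (-2*Real.exp t + 1 + 2*Real.exp (t/2) * Real.sqrt (Real.exp t - 1)))) := by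
  have hend : slitEnd (Real.exp t) = 2 * Real.exp t - 1 - 2 * Real.exp (t / 2) *
      Real.sqrt (Real.exp t - 1) := by
    rw [slitEnd, Real.exp_half]
  refine ⟨⟨classU_slitMap1 ht, hend ▸ image_slitMap1 ht⟩, ?_, ?_⟩
  · rw [slitMap2_eq_neg_comp_neg]
    exact (classU_slitMap1 ht).neg_comp_neg
  · rw [slitMap2_eq_neg_comp_neg, image_neg_comp_neg, image_slitMap1 ht, neg_uDisc_diff_Ico,
      hend]
    congr 3
    ring
end
end
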